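/- Let W be a finite string over {A, B} (containing no letter X). Then the cyclic values in the tight puzzle satisfy |(W)| = |(W̄)|, where W̄ is the reversed string. -/

import Mathlib

/-!
The "tight puzzle" of Schwartz–Tabachnikov.  Strings over the alphabet `{A, X, B}`;
word list (coefficient, weight): `X (1,0)`, `XA (1,1)`, `XAA (1,1)`, `AXA (2,1)`,
`AAA (-1,1)`, `BA (-1,1)`, `ABA (-1,1)`, `XXA (-1,1)`; in a parsing the word `X` may
never be immediately followed by the word `XA` or the word `BA`.
-/

open scoped Classical

/-- The three-letter alphabet. -/
inductive PLetter | A | X | B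
deriving DecidableEq

/-- Strings over the alphabet. -/
abbrev PWord := List PLetter

/-- The tight puzzle word list. -/
def tightWords : List PWord :=
  [[PLetter.X], [PLetter.X, PLetter.A], [PLetter.X, PLetter.A, PLetter.A],
   [PLetter.A, PLetter.X, PLetter.A], [PLetter.A, PLetter.A, PLetter.A],
   [PLetter.B, PLetter.A], [PLetter.A, PLetter.B, PLetter.A],
   [PLetter.X, PLetter.X, PLetter.A]]

/-- Coefficients of the words of the tight puzzle (`AXA ↦ 2`; `AAA, BA, ABA, XXA ↦ -1`;
`X, XA, XAA ↦ 1`). -/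
def tightCoeff (w : PWord) : ℤ :=
  if w = [PLetter.A, PLetter.X, PLetter.A] then 2
  else if w = [PLetter.A, PLetter.A, PLetter.A] ∨ w = [PLetter.B, PLetter.A] ∨
      w = [PLetter.A, PLetter.B, PLetter.A] ∨ w = [PLetter.X, PLetter.X, PLetter.A] then -1
  else 1

/-- Weights of the words: the word `X` has weight `0`, all other words weight `1`. -/
def wordWt (w : PWord) : ℕ := if w = [PLetter.X] then 0 else 1

/-- The forbidden adjacency: the word `X` immediately followed by `XA` or `BA`. -/
def Bad (u v : PWord) : Prop :=
  u = [PLetter.X] ∧ (v = [PLetter.X, PLetter.A] ∨ v = [PLetter.B, PLetter.A])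

/-- The contribution `coefficient · t^weight ∈ ℤ[t]` of a parsing `L`. -/
noncomputable def parseVal (c : PWord → ℤ) (L : List PWord) : Polynomial ℤ :=
  Polynomial.C ((L.map c).prod) * Polynomial.X ^ ((L.map wordWt).sum)

/-- `L` is a parsing in the tight puzzle: all its words are on the word list and the
forbidden adjacency never occurs. -/
def TightChain (L : List PWord) : Prop :=
  (∀ w ∈ L, w ∈ tightWords) ∧ List.Chain' (fun u v => ¬ Bad u v) L

/-- The *core* of a string: what remains after deleting all leading and trailing `X`s. -/
def core (s : PWord) : PWord :=
  ((s.dropWhile (· == PLetter.X)).reverse.dropWhile (· == PLetter.X)).reverse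

/-- `L` is a parsing of the bi-infinite string `⋯XX·W·XX⋯` (with the infinitely many
padding `X`s parsed as copies of the word `X` and trimmed away): the words of `L`
concatenate to `W` up to padding by `X`s on either side, `L` neither starts nor ends
with the word `X`, and (because of the padding `X`-words on the left) the first word
of `L` is not `XA` or `BA`. -/
def IsOpenParsing (W : PWord) (L : List PWord) : Prop :=
  TightChain L ∧ core L.flatten = core W ∧
  ∀ h : L ≠ [],
    L.head h ≠ [PLetter.X] ∧ L.head h ≠ [PLetter.X, PLetter.A] ∧
    L.head h ≠ [PLetter.B, PLetter.A] ∧ L.getLast h ≠ [PLetter.X]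

/-- `(r, L)` is a parsing of the cyclic string `(W)`: reading the necklace of the
letters of `W` starting at position `r`, the words of `L` concatenate to it, the
forbidden adjacency does not occur (cyclically), and `r < (last word).length`
(so that every parsing of the necklace is counted exactly once). -/
def IsCyclicParsing (W : PWord) (r : ℕ) (L : List PWord) : Prop :=
  TightChain L ∧
  ∃ h : L ≠ [], L.flatten = W.rotate r ∧ r < (L.getLast h).length ∧
    ¬ Bad (L.getLast h) (L.head h)

/-- `L` is a parsing of the locked string `[W]`: the words of `L` concatenate exactly
to `W`, no padding allowed. -/
def IsLockedParsing (W : PWord) (L : List PWord) : Prop :=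
  TightChain L ∧ L.flatten = W

/-- The nine words of both puzzles, as a function (used to enumerate parsings). -/
def wordOf : Fin 9 → PWord :=
  ![[PLetter.X], [PLetter.X, PLetter.A], [PLetter.X, PLetter.A, PLetter.A],
    [PLetter.X, PLetter.B, PLetter.A], [PLetter.A, PLetter.X, PLetter.A],
    [PLetter.A, PLetter.A, PLetter.A], [PLetter.B, PLetter.A],
    [PLetter.A, PLetter.B, PLetter.A], [PLetter.X, PLetter.X, PLetter.A]]

/-- The open value `|W| ∈ ℤ[t]`: the sum of `coefficient · t^weight` over all parsings
of the bi-infinite string `⋯XX·W·XX⋯` (any such parsing consists of at most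
`W.length + 2` words). -/
noncomputable def openVal (W : PWord) : Polynomial ℤ :=
  ∑ k ∈ Finset.range (W.length + 3), ∑ f : Fin k → Fin 9,
    if IsOpenParsing W ((List.ofFn f).map wordOf) then
      parseVal tightCoeff ((List.ofFn f).map wordOf)
    else 0

/-- The cyclic value `|(W)| ∈ ℤ[t]`: the sum of `coefficient · t^weight` over all
parsings of the cyclic string `(W)`. -/
noncomputable def cycVal (W : PWord) : Polynomial ℤ :=
  ∑ r ∈ Finset.range W.length, ∑ k ∈ Finset.range (W.length + 1), ∑ f : Fin k → Fin 9,
    if IsCyclicParsing W r ((List.ofFn f).map wordOf) then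
      parseVal tightCoeff ((List.ofFn f).map wordOf)
    else 0

/-- The locked value `|[W]| ∈ ℤ[t]`: the sum of `coefficient · t^weight` over all
parsings whose concatenation is exactly `W`. -/
noncomputable def lockVal (W : PWord) : Polynomial ℤ :=
  ∑ k ∈ Finset.range (W.length + 1), ∑ f : Fin k → Fin 9,
    if IsLockedParsing W ((List.ofFn f).map wordOf) then
      parseVal tightCoeff ((List.ofFn f).map wordOf)
    else 0

/-!
Over `{A, B}` only the words `AAA`, `BA`, `ABA` of the list can occur; each has coefficient `-1`
and weight `1`, so a parsing into `k` words contributes `(-t)^k`. These three words form a prefix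
code, hence for each starting offset the parsing is unique and is found greedily.

Write `W = A^v B A^m₁ ⋯ B A^mₖ B A^e`. Cyclically this is the sequence of blocks `B A^m₁, …,
B A^mₖ, B A^(e+v)`. In a parsing every `B` starts a word `BA` or sits in the middle of an `ABA`,
so a run of `m` letters `A` after a `B` is one `A` of that word, some `AAA`s and perhaps the first
`A` of the next `ABA`: a parsing exists iff no run has length `≡ 0 (mod 3)`, and then the run
contributes `⌊(m+2)/3⌋` words. Since the offset `r` is smaller than the length of the last word,
only `r < 3` occur. The resulting value depends only on the multiset of runs, which reversal
preserves.
-/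

namespace TightPuzzle

open PLetter List

def IsTile (w : PWord) : Prop := w = [A, A, A] ∨ w = [B, A] ∨ w = [A, B, A]

lemma IsTile.ne_X {w : PWord} (hw : IsTile w) : w ≠ [X] := by
  rcases hw with rfl | rfl | rfl <;> simp

lemma IsTile.two_le_length {w : PWord} (hw : IsTile w) : 2 ≤ w.length := by
  rcases hw with rfl | rfl | rfl <;> simp

lemma isTile_of_mem_tightWords {w : PWord} (hw : w ∈ tightWords) (hX : X ∉ w) : IsTile w := by
  revert w
  unfold IsTile
  decide

lemma length_le_length_flatten_of_isTile {L : List PWord} (hL : ∀ w ∈ L, IsTile w) :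
    L.length ≤ L.flatten.length := by
  rw [length_flatten, ← length_map (f := length)]
  refine length_le_sum_of_one_le _ fun _ hk => ?_
  obtain ⟨w, hw, rfl⟩ := mem_map.1 hk
  linarith [(hL w hw).two_le_length]

lemma getLast?_flatten_of_isTile {L : List PWord} (hL : ∀ w ∈ L, IsTile w) (h : L ≠ []) :
    L.flatten.getLast? = some A := by
  rw [← dropLast_append_getLast h, flatten_append, flatten_singleton]
  rcases hL _ (getLast_mem h) with hw | hw | hw <;> rw [hw] <;> simp

lemma length_getLast_of_flatten_eq_append_A_A {L : List PWord} (hL : ∀ w ∈ L, IsTile w)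
    (h : L ≠ []) {s : PWord} (hfl : L.flatten = s ++ [A, A]) : (L.getLast h).length = 3 := by
  rw [← dropLast_append_getLast h, flatten_append, flatten_singleton] at hfl
  have hend := congrArg (fun l => l.reverse.take 2) hfl
  rcases hL _ (getLast_mem h) with hw | hw | hw <;> rw [hw] at hend ⊢ <;> simp at hend ⊢

lemma parseVal_of_isTile {L : List PWord} (hL : ∀ w ∈ L, IsTile w) :
    parseVal tightCoeff L = (-Polynomial.X) ^ L.length := by
  have hc : L.map tightCoeff = replicate L.length (-1) := by
    refine eq_replicate_iff.2 ⟨length_map _, fun c hc => ?_⟩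
    obtain ⟨w, hw, rfl⟩ := mem_map.1 hc
    rcases hL w hw with rfl | rfl | rfl <;> rfl
  have hwt : L.map wordWt = replicate L.length 1 := by
    refine eq_replicate_iff.2 ⟨length_map _, fun c hc => ?_⟩
    obtain ⟨w, hw, rfl⟩ := mem_map.1 hc
    rcases hL w hw with rfl | rfl | rfl <;> rfl
  rw [parseVal, hc, hwt, prod_replicate, sum_replicate, smul_eq_mul, mul_one,
    neg_pow (Polynomial.X : Polynomial ℤ), map_pow, map_neg, map_one]

def tileParse : PWord → Option (List PWord)
  | [] => some []
  | A :: A :: A :: s => (tileParse s).map ([A, A, A] :: ·)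
  | B :: A :: s => (tileParse s).map ([B, A] :: ·)
  | A :: B :: A :: s => (tileParse s).map ([A, B, A] :: ·)
  | _ => none

lemma tileParse_append_of_isTile {w : PWord} (hw : IsTile w) (s : PWord) :
    tileParse (w ++ s) = (tileParse s).map (w :: ·) := by
  rcases hw with rfl | rfl | rfl <;> rfl

theorem tileParse_eq_some_iff {s : PWord} {L : List PWord} :
    tileParse s = some L ↔ (∀ w ∈ L, IsTile w) ∧ L.flatten = s := by
  constructor
  · intro h
    fun_induction tileParse s generalizing L with
    | case1 => simp_all
    | case2 s ih | case3 s ih | case4 s ih =>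
      obtain ⟨L', hL', rfl⟩ := Option.map_eq_some_iff.1 h
      obtain ⟨htiles, rfl⟩ := ih hL'
      simp_all [IsTile]
    | case5 => simp at h
  · rintro ⟨hL, rfl⟩
    induction L with
    | nil => rfl
    | cons w L ih =>
      simp only [forall_mem_cons] at hL
      rw [flatten_cons, tileParse_append_of_isTile hL.1, ih hL.2]
      rfl

lemma map_length_tileParse_replicate_append (u : ℕ) (s : PWord) :
    (tileParse (replicate u A ++ s)).map length =
      ((tileParse (replicate (u % 3) A ++ s)).map length).map (· + u / 3) := by
  induction u using Nat.strong_induction_on with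
  | _ u ih =>
    rcases lt_or_ge u 3 with hu | hu
    · rw [Nat.mod_eq_of_lt hu, Nat.div_eq_of_lt hu]
      simp only [Nat.add_zero, Option.map_id']
    · obtain ⟨u, rfl⟩ := Nat.exists_eq_add_of_le' hu
      have hstep : tileParse (replicate (u + 3) A ++ s) =
          (tileParse (replicate u A ++ s)).map ([A, A, A] :: ·) := by
        rw [replicate_succ, replicate_succ, replicate_succ]
        rfl
      rw [hstep, Option.map_map,
        show (length ∘ ([A, A, A] :: ·)) = (· + 1) ∘ length from rfl, ← Option.map_map,
        ih u (by omega), Option.map_map, Nat.add_mod_right]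
      exact Option.map_congr fun k _ => by simp only [Function.comp]; omega

lemma map_length_tileParse_replicate (u : ℕ) :
    (tileParse (replicate u A)).map length = if u % 3 = 0 then some (u / 3) else none := by
  have h := map_length_tileParse_replicate_append u []
  rw [append_nil, append_nil] at h
  rw [h]
  have : u % 3 < 3 := Nat.mod_lt u (by norm_num)
  interval_cases hu : u % 3 <;> simp [tileParse]

lemma map_length_tileParse_replicate_B (u m : ℕ) {s : PWord} (hs : s.head? ≠ some A) :
    (tileParse (replicate u A ++ B :: (replicate m A ++ s))).map length =
      if u % 3 ≠ 2 ∧ m ≠ 0 then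
        ((tileParse (replicate (m - 1) A ++ s)).map length).map (· + (u / 3 + 1))
      else none := by
  rw [map_length_tileParse_replicate_append]
  have : u % 3 < 3 := Nat.mod_lt u (by norm_num)
  rcases m with _ | m
  · rcases s with _ | ⟨_ | _ | _, s⟩ <;> interval_cases hu : u % 3 <;> simp_all [tileParse]
  · interval_cases hu : u % 3 <;>
      simp [tileParse, replicate_succ, Option.map_map, Function.comp_def, Nat.add_assoc,
        Nat.add_comm 1]

def blocks (ms : List ℕ) : PWord := (ms.map fun m => B :: replicate m A).flatten

def blockTiles (ms : List ℕ) : ℕ := (ms.map fun m => (m + 2) / 3).sum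

lemma blocks_cons (m : ℕ) (ms : List ℕ) : blocks (m :: ms) = B :: (replicate m A ++ blocks ms) :=
  rfl

lemma blocks_append (ms ns : List ℕ) : blocks (ms ++ ns) = blocks ms ++ blocks ns := by
  simp [blocks]

lemma blocks_append_replicate (t : List ℕ) (e r : ℕ) :
    blocks (t ++ [e]) ++ replicate r A = blocks (t ++ [e + r]) := by
  simp [blocks, ← replicate_append_replicate]

lemma exists_blocks_append_singleton_eq_cons (t : List ℕ) (e : ℕ) :
    ∃ S, blocks (t ++ [e]) = B :: S := by
  cases t <;> simp [blocks_cons]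

lemma length_blocks (ms : List ℕ) : (blocks ms).length = ms.length + ms.sum := by
  induction ms with
  | nil => rfl
  | cons m ms ih => simp [blocks_cons, ih]; omega

lemma X_notMem_replicate_append_blocks (v : ℕ) (ms : List ℕ) :
    X ∉ replicate v A ++ blocks ms := by
  simp [blocks, mem_replicate]

lemma blockTiles_append_singleton (t : List ℕ) (e : ℕ) :
    blockTiles (t ++ [e]) = blockTiles t + (e + 2) / 3 := by
  simp [blockTiles]

lemma rotate_replicate_append_blocks {v r : ℕ} (hrv : r ≤ v) (t : List ℕ) (e : ℕ) :
    (replicate v A ++ blocks (t ++ [e])).rotate r =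
      replicate (v - r) A ++ blocks (t ++ [e + r]) := by
  obtain ⟨v, rfl⟩ := Nat.exists_eq_add_of_le hrv
  have := rotate_append_length_eq (replicate r A) (replicate v A ++ blocks (t ++ [e]))
  rw [length_replicate] at this
  rw [replicate_add, append_assoc, this, Nat.add_sub_cancel_left, append_assoc,
    blocks_append_replicate]

lemma reverse_replicate_append_blocks (v e : ℕ) (t : List ℕ) :
    (replicate v A ++ blocks (t ++ [e])).reverse = replicate e A ++ blocks (t.reverse ++ [v]) := by
  induction t generalizing v with
  | nil => simp [blocks]
  | cons m t ih =>
    rw [cons_append, blocks_cons, reverse_append, reverse_cons, ih, reverse_cons,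
      blocks_append, blocks_append]
    simp [blocks]

lemma exists_eq_replicate_append_blocks {W : PWord} (hW : X ∉ W) :
    ∃ v ms, W = replicate v A ++ blocks ms := by
  induction W with
  | nil => exact ⟨0, [], rfl⟩
  | cons a W ih =>
    obtain ⟨v, ms, rfl⟩ := ih (fun h => hW (mem_cons_of_mem a h))
    cases a
    · exact ⟨v + 1, ms, rfl⟩
    · exact absurd mem_cons_self hW
    · exact ⟨0, v :: ms, rfl⟩

theorem map_length_tileParse_replicate_blocks (u e : ℕ) (t : List ℕ) :
    (tileParse (replicate u A ++ blocks (t ++ [e]))).map length =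
      if (∀ m ∈ t, m % 3 ≠ 0) ∧ u % 3 ≠ 2 ∧ e % 3 = 1 then
        some (u / 3 + blockTiles (t ++ [e]))
      else none := by
  induction t generalizing u with
  | nil =>
    rw [nil_append, show blocks [e] = B :: (replicate e A ++ []) from rfl,
      map_length_tileParse_replicate_B _ _ (by simp), append_nil,
      map_length_tileParse_replicate]
    split_ifs <;> simp_all [blockTiles] <;> omega
  | cons m t ih =>
    rw [cons_append, blocks_cons,
      map_length_tileParse_replicate_B _ _ (by cases t <;> simp [blocks_cons]), ih]
    split_ifs <;> simp_all [blockTiles] <;> omega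

theorem isCyclicParsing_iff {W : PWord} (hW : X ∉ W) {r : ℕ} {L : List PWord} :
    IsCyclicParsing W r L ↔
      (∀ w ∈ L, IsTile w) ∧
        ∃ h : L ≠ [], L.flatten = W.rotate r ∧ r < (L.getLast h).length := by
  constructor
  · rintro ⟨⟨hmem, -⟩, hne, hfl, hr, -⟩
    refine ⟨fun w hw => isTile_of_mem_tightWords (hmem w hw) fun hX => hW ?_, hne, hfl, hr⟩
    exact (rotate_perm W r).subset (hfl ▸ mem_flatten_of_mem hw hX)
  · rintro ⟨hL, hne, hfl, hr⟩
    have hbad : ∀ u ∈ L, ∀ v, ¬Bad u v := fun u hu v hb => (hL u hu).ne_X hb.1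
    refine ⟨⟨fun w hw => ?_, (pairwise_of_forall_mem_list fun u hu v _ => hbad u hu v).isChain⟩,
      hne, hfl, hr, hbad _ (getLast_mem hne) _⟩
    rcases hL w hw with rfl | rfl | rfl <;> simp [tightWords]

lemma eq_of_isCyclicParsing {W : PWord} (hW : X ∉ W) {r : ℕ} {L L' : List PWord}
    (hL : IsCyclicParsing W r L) (hL' : IsCyclicParsing W r L') : L = L' := by
  obtain ⟨hL, -, hfl, -⟩ := (isCyclicParsing_iff hW).1 hL
  obtain ⟨hL', -, hfl', -⟩ := (isCyclicParsing_iff hW).1 hL'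
  exact Option.some.inj <| (tileParse_eq_some_iff.2 ⟨hL, hfl⟩).symm.trans
    (tileParse_eq_some_iff.2 ⟨hL', hfl'⟩)

theorem isCyclicParsing_B_cons_two_iff {S : PWord} (hW : X ∉ B :: S) {L : List PWord} :
    IsCyclicParsing (B :: S) 2 L ↔
      ∃ L₁, (∀ w ∈ L₁, IsTile w) ∧ S = A :: (L₁.flatten ++ [A]) ∧ L = L₁ ++ [[A, B, A]] := by
  rw [isCyclicParsing_iff hW]
  constructor
  · rintro ⟨htiles, hne, hfl, hr⟩
    have hw := htiles _ (getLast_mem hne)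
    have hlen : (L.getLast hne).length ≤ (B :: S).length := by
      rw [← length_rotate (B :: S) 2, ← hfl]
      exact (sublist_flatten_of_mem (getLast_mem hne)).length_le
    rw [← dropLast_append_getLast hne] at hfl ⊢
    rcases S with _ | ⟨a, _ | ⟨b, S⟩⟩
    · simp at hlen; omega
    · simp at hlen; omega
    rw [flatten_append, flatten_singleton] at hfl
    simp only [rotate_cons_succ, rotate_zero, cons_append] at hfl
    rcases hw with hw | hw | hw <;> rw [hw] at hfl hr ⊢
    · have := congrArg (fun l => l.reverse.take 2) hfl
      simp at this
    · simp at hr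
    · rw [show L.dropLast.flatten ++ [A, B, A] = (L.dropLast.flatten ++ [A]) ++ [B, A] by simp,
        show b :: (S ++ [B] ++ [a]) = (b :: S) ++ [B, a] by simp] at hfl
      obtain ⟨h1, h2⟩ := append_inj' hfl rfl
      obtain ⟨-, rfl⟩ : B = B ∧ A = a := by simpa using h2
      refine ⟨L.dropLast, fun w hw => htiles w (mem_of_mem_dropLast hw), ?_, rfl⟩
      rw [h1]
  · rintro ⟨L₁, htiles, rfl, rfl⟩
    refine ⟨?_, by simp, ?_, by simp⟩
    · simp only [mem_append, mem_singleton]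
      rintro w (hw | rfl)
      exacts [htiles w hw, Or.inr (Or.inr rfl)]
    · simp [rotate_cons_succ]

lemma sum_ofFn_ite_eq_of_unique {M : Type*} [AddCommMonoid M] {N : ℕ} {Q : List PWord → Prop}
    (g : List PWord → M)
    (ℓ : List (Fin 9)) (hℓ : ℓ.length < N) (hQ : ∀ L, Q L ↔ L = ℓ.map wordOf) :
    ∑ k ∈ Finset.range N, ∑ f : Fin k → Fin 9,
      (if Q ((ofFn f).map wordOf) then g ((ofFn f).map wordOf) else 0) = g (ℓ.map wordOf) := by
  have hinj : Function.Injective wordOf := by decide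
  rw [Finset.sum_sigma', Finset.sum_eq_single_of_mem ⟨ℓ.length, ℓ.get⟩ (by simp [hℓ])]
  · simp [hQ]
  · rintro ⟨k, f⟩ - hne
    rw [if_neg (fun h => hne ?_)]
    rw [hQ, ← ofFn_get ℓ] at h
    exact ofFn_inj'.1 ((map_injective_iff.2 hinj) h)

noncomputable def offsetVal (W : PWord) (r : ℕ) : Polynomial ℤ :=
  ∑ k ∈ Finset.range (W.length + 1), ∑ f : Fin k → Fin 9,
    if IsCyclicParsing W r ((ofFn f).map wordOf) then
      parseVal tightCoeff ((ofFn f).map wordOf)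
    else 0

lemma cycVal_eq_sum_offsetVal (W : PWord) :
    cycVal W = ∑ r ∈ Finset.range W.length, offsetVal W r := rfl

lemma offsetVal_eq_zero {W : PWord} {r : ℕ} (h : ∀ L, ¬IsCyclicParsing W r L) :
    offsetVal W r = 0 :=
  Finset.sum_eq_zero fun _ _ => Finset.sum_eq_zero fun _ _ => if_neg (h _)

def tileIndex (w : PWord) : Fin 9 :=
  if w = [A, A, A] then 5 else if w = [B, A] then 6 else 7

lemma offsetVal_eq_pow {W : PWord} (hW : X ∉ W) {r : ℕ} {L : List PWord}
    (hL : IsCyclicParsing W r L) : offsetVal W r = (-Polynomial.X) ^ L.length := by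
  obtain ⟨htiles, -, hfl, -⟩ := (isCyclicParsing_iff hW).1 hL
  have hcode : (L.map tileIndex).map wordOf = L := by
    rw [map_map]
    refine (map_congr_left fun w hw => ?_).trans (map_id L)
    rcases htiles w hw with rfl | rfl | rfl <;> rfl
  have hlen : L.length ≤ W.length := by
    simpa [hfl] using length_le_length_flatten_of_isTile htiles
  rw [offsetVal, sum_ofFn_ite_eq_of_unique _ (L.map tileIndex) (by simp; omega), hcode,
    parseVal_of_isTile htiles]
  intro L'
  rw [hcode]
  exact ⟨fun h => eq_of_isCyclicParsing hW h hL, fun h => h ▸ hL⟩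

lemma offsetVal_eq_elim_tileParse {W : PWord} (hW : X ∉ W) (hne : W ≠ []) {r : ℕ}
    (hlast : ∀ L, (∀ w ∈ L, IsTile w) → ∀ h : L ≠ [], L.flatten = W.rotate r →
      r < (L.getLast h).length) :
    offsetVal W r = ((tileParse (W.rotate r)).map length).elim 0 ((-Polynomial.X) ^ ·) := by
  rcases h : tileParse (W.rotate r) with _ | L
  · refine offsetVal_eq_zero fun L hL => ?_
    obtain ⟨htiles, -, hfl, -⟩ := (isCyclicParsing_iff hW).1 hL
    simp [tileParse_eq_some_iff.2 ⟨htiles, hfl⟩] at h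
  · obtain ⟨htiles, hfl⟩ := tileParse_eq_some_iff.1 h
    have hL : L ≠ [] := by
      rintro rfl
      exact hne (rotate_eq_nil_iff.1 hfl.symm)
    exact offsetVal_eq_pow hW ((isCyclicParsing_iff hW).2 ⟨htiles, hL, hfl, hlast L htiles hL hfl⟩)

lemma offsetVal_eq_zero_of_getLast? {W : PWord} (hW : X ∉ W) {r : ℕ}
    (h : (W.rotate r).getLast? = some B) : offsetVal W r = 0 := by
  refine offsetVal_eq_zero fun L hL => ?_
  obtain ⟨htiles, hne, hfl, -⟩ := (isCyclicParsing_iff hW).1 hL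
  simp [← hfl, getLast?_flatten_of_isTile htiles hne] at h

lemma offsetVal_eq_zero_of_three_le {W : PWord} {r : ℕ} (hr : 3 ≤ r) : offsetVal W r = 0 := by
  refine offsetVal_eq_zero ?_
  rintro L ⟨⟨hmem, -⟩, hne, -, hlt, -⟩
  have : ∀ w ∈ tightWords, w.length ≤ 3 := by decide
  linarith [this _ (hmem _ (getLast_mem hne))]

lemma cycVal_eq_sum_range_three (W : PWord) :
    cycVal W = ∑ r ∈ Finset.range 3, if r < W.length then offsetVal W r else 0 := by
  rw [cycVal_eq_sum_offsetVal, ← Finset.sum_filter,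
    ← Finset.sum_filter_of_ne (p := (· < 3)) fun r _ h => ?_]
  · congr 1
    ext r
    simp only [Finset.mem_filter, Finset.mem_range]
    omega
  · by_contra hr
    exact h (offsetVal_eq_zero_of_three_le (not_lt.1 hr))

lemma offsetVal_B_cons_append_A_two {S : PWord} (hW : X ∉ B :: (S ++ [A])) :
    offsetVal (B :: (S ++ [A])) 2 =
      ((tileParse (A :: B :: S)).map length).elim 0 ((-Polynomial.X) ^ ·) := by
  have hzero (h : ∀ L₁ : List PWord, (∀ w ∈ L₁, IsTile w) → S ≠ A :: L₁.flatten) :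
      offsetVal (B :: (S ++ [A])) 2 = 0 :=
    offsetVal_eq_zero fun L hL => by
      obtain ⟨L₁, htiles, hS, -⟩ := (isCyclicParsing_B_cons_two_iff hW).1 hL
      exact h L₁ htiles (append_cancel_right (hS.trans (by simp)))
  rcases S with _ | ⟨_ | _ | _, s⟩
  · exact hzero (by simp)
  · rcases hs : tileParse s with _ | L₁
    · rw [hzero fun L₁ htiles hS => ?_]
      · simp [tileParse, hs]
      simp [(cons_inj_right A).1 hS, tileParse_eq_some_iff.2 ⟨htiles, rfl⟩] at hs
    · obtain ⟨htiles, rfl⟩ := tileParse_eq_some_iff.1 hs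
      rw [offsetVal_eq_pow hW ((isCyclicParsing_B_cons_two_iff hW).2 ⟨L₁, htiles, by simp, rfl⟩)]
      simp [tileParse, hs]
  all_goals exact hzero (by simp)

lemma offsetVal_B_cons_append_B_two {S : PWord} (hW : X ∉ B :: (S ++ [B])) :
    offsetVal (B :: (S ++ [B])) 2 = 0 :=
  offsetVal_eq_zero fun L hL => by
    obtain ⟨L₁, -, hS, -⟩ := (isCyclicParsing_B_cons_two_iff hW).1 hL
    have := congrArg getLast? hS
    rw [show A :: (L₁.flatten ++ [A]) = (A :: L₁.flatten) ++ [A] by simp, getLast?_concat,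
      getLast?_concat] at this
    simp at this

lemma offsetVal_replicate_append_blocks_of_le {v r : ℕ} (hrv : r ≤ v) (hr : r ≤ 2)
    (t : List ℕ) (e : ℕ) :
    offsetVal (replicate v A ++ blocks (t ++ [e])) r =
      if (∀ m ∈ t, m % 3 ≠ 0) ∧ (v - r) % 3 ≠ 2 ∧ (e + r) % 3 = 1 then
        (-Polynomial.X) ^ ((v - r) / 3 + blockTiles (t ++ [e + r]))
      else 0 := by
  rw [offsetVal_eq_elim_tileParse (X_notMem_replicate_append_blocks _ _)
      (by simp [blocks_append, blocks_cons]),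
    rotate_replicate_append_blocks hrv, map_length_tileParse_replicate_blocks]
  · split_ifs <;> rfl
  · intro L htiles hne hfl
    rcases (by omega : r ≤ 1 ∨ r = 2) with hr1 | rfl
    · linarith [(htiles _ (getLast_mem hne)).two_le_length]
    · rw [length_getLast_of_flatten_eq_append_A_A htiles hne
        (s := replicate (v - 2) A ++ blocks (t ++ [e]))]
      · norm_num
      rw [hfl, rotate_replicate_append_blocks hrv, append_assoc, ← blocks_append_replicate]
      rfl

lemma offsetVal_replicate_append_blocks (v e : ℕ) (t : List ℕ) {r : ℕ} (hr : r < 3)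
    (hrn : r < (replicate v A ++ blocks (t ++ [e])).length) :
    offsetVal (replicate v A ++ blocks (t ++ [e])) r =
      if (∀ m ∈ t, m % 3 ≠ 0) ∧ (e + v) % 3 ≠ 0 ∧ (e + r) % 3 = 1 then
        (-Polynomial.X) ^ blockTiles (t ++ [e + v])
      else 0 := by
  simp only [length_append, length_replicate, length_blocks, sum_append, sum_singleton,
    length_singleton] at hrn
  rw [blockTiles_append_singleton]
  rcases le_or_gt r v with hrv | hvr
  · rw [offsetVal_replicate_append_blocks_of_le hrv (by omega), blockTiles_append_singleton]
    simp only [ite_and]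
    congr 1
    split_ifs <;> first | rfl | omega | (congr 1; omega)
  obtain ⟨S, hS⟩ := exists_blocks_append_singleton_eq_cons t e
  have hW := X_notMem_replicate_append_blocks v (t ++ [e])
  rcases (by omega : v = 0 ∧ r = 1 ∨ v = 1 ∧ r = 2 ∨ v = 0 ∧ r = 2) with
    ⟨rfl, rfl⟩ | ⟨rfl, rfl⟩ | ⟨rfl, rfl⟩
  · rw [offsetVal_eq_zero_of_getLast? hW (by simp [hS, rotate_cons_succ]), if_neg (by omega)]
  · rw [offsetVal_eq_zero_of_getLast? hW (by simp [hS, rotate_cons_succ]), if_neg (by omega)]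
  rcases e with _ | e
  · obtain _ | ⟨m, t⟩ := t
    · simp at hrn
    rw [replicate_zero, nil_append, cons_append, blocks_cons, blocks_append,
      show blocks [0] = [B] from rfl, ← append_assoc,
      offsetVal_B_cons_append_B_two (by simp [blocks]), if_neg (by omega)]
  obtain ⟨S, hS⟩ := exists_blocks_append_singleton_eq_cons t e
  have hS' : blocks (t ++ [e + 1]) = B :: (S ++ [A]) := by
    rw [← blocks_append_replicate t e 1, hS]
    rfl
  rw [replicate_zero, nil_append, hS'] at hW ⊢
  rw [offsetVal_B_cons_append_A_two hW,
    show A :: B :: S = replicate 1 A ++ blocks (t ++ [e]) by rw [hS]; rfl,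
    map_length_tileParse_replicate_blocks, blockTiles_append_singleton,
    apply_ite (Option.elim · _ _)]
  simp only [ite_and, Option.elim_some, Option.elim_none]
  congr 1
  split_ifs <;> first | rfl | omega | (congr 1; omega)

noncomputable def necklaceVal (ms : List ℕ) : Polynomial ℤ :=
  if ∀ m ∈ ms, m % 3 ≠ 0 then (-Polynomial.X) ^ blockTiles ms else 0

lemma necklaceVal_perm {ms ns : List ℕ} (h : ms.Perm ns) : necklaceVal ms = necklaceVal ns := by
  simp only [necklaceVal, blockTiles, (h.map _).sum_eq, h.mem_iff]

theorem cycVal_replicate_append_blocks (v e : ℕ) (t : List ℕ) :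
    cycVal (replicate v A ++ blocks (t ++ [e])) = necklaceVal (t ++ [e + v]) := by
  have hlen : (replicate v A ++ blocks (t ++ [e])).length = v + t.length + 1 + t.sum + e := by
    simp [length_blocks]
    omega
  rw [cycVal_eq_sum_range_three, Finset.sum_congr rfl fun r hr =>
    (show _ = if (∀ m ∈ t, m % 3 ≠ 0) ∧ (e + v) % 3 ≠ 0 ∧ (e + r) % 3 = 1 then
        (-Polynomial.X) ^ blockTiles (t ++ [e + v]) else 0 from ?_)]
  · simp only [Finset.sum_range_succ, Finset.sum_range_zero, zero_add, necklaceVal,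
      forall_mem_append, forall_mem_singleton, ← and_assoc]
    by_cases h : (∀ m ∈ t, m % 3 ≠ 0) ∧ (e + v) % 3 ≠ 0
    · simp only [eq_true h, true_and, if_true]
      split_ifs <;> first | omega | simp
    · simp [h]
  · rw [Finset.mem_range] at hr
    split_ifs with hrn hc hc
    · rw [offsetVal_replicate_append_blocks v e t hr hrn, if_pos hc]
    · rw [offsetVal_replicate_append_blocks v e t hr hrn, if_neg hc]
    · omega
    · rfl

end TightPuzzle

open PLetter in
/-- For every finite string `W` over `{A, B}` (no letter `X`), the cyclic values in
the tight puzzle satisfy `|(W)| = |(W̄)|`. -/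
theorem cyclic_reversal_noX (W : PWord) (hW : ∀ l ∈ W, l ≠ X) :
    cycVal W = cycVal W.reverse := by
  obtain ⟨v, ms, rfl⟩ := TightPuzzle.exists_eq_replicate_append_blocks (fun h => hW X h rfl)
  rcases List.eq_nil_or_concat ms with rfl | ⟨t, e, rfl⟩
  · simp [TightPuzzle.blocks]
  · rw [List.concat_eq_append, TightPuzzle.reverse_replicate_append_blocks,
      TightPuzzle.cycVal_replicate_append_blocks, TightPuzzle.cycVal_replicate_append_blocks]
    exact TightPuzzle.necklaceVal_perm
      (by simpa [add_comm] using ((List.reverse_perm t).append_right [e + v]).symm)
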